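/- arXiv:2308.05689 — 6 statements merged into one kernel-verified Lean document; each statement's English description precedes it below -/
import Mathlib

section
/- Let R be a stability function of order p ∈ ℕ with s stages. Then R is strongly stable if and only if the following two conditions both hold: (a) for every n ∈ ℕ and every semi-dissipative, asymptotically stable matrix L ∈ ℂ^{n×n} there exists τ₀ > 0 such that ‖R(τL)‖₂ ≤ 1 for all τ ∈ (0, τ₀]; and (b) for every y ∈ ℝ there exists τ₀ > 0 such that |R(iτy)| ≤ 1 for all τ ∈ (0, τ₀]. -/
open Matrix Polynomial
open scoped Matrix.Norms.L2Operator ComplexOrder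

noncomputable section

/-- Hermitian part `L_H = (L + L*)/2` of a matrix. -/
def hermPart {n : ℕ} (L : Matrix (Fin n) (Fin n) ℂ) : Matrix (Fin n) (Fin n) ℂ :=
  (1/2 : ℂ) • (L + Lᴴ)

/-- Skew-Hermitian part `L_S = (L - L*)/2` of a matrix. -/
def skewPart {n : ℕ} (L : Matrix (Fin n) (Fin n) ℂ) : Matrix (Fin n) (Fin n) ℂ :=
  (1/2 : ℂ) • (L - Lᴴ)

/-- A matrix is semi-dissipative if its Hermitian part is negative semidefinite. -/
def IsSemiDissipative {n : ℕ} (L : Matrix (Fin n) (Fin n) ℂ) : Prop :=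
  (-(hermPart L)).PosSemidef

/-- A matrix is asymptotically stable if all of its eigenvalues have negative real part. -/
def IsAsympStable {n : ℕ} (L : Matrix (Fin n) (Fin n) ℂ) : Prop :=
  ∀ μ ∈ spectrum ℂ L, μ.re < 0

/-- Evaluation of the stability function `R(z) = ∑_{j=0}^s c_j z^j / j!` at a matrix. -/
def stabFunMat (c : ℕ → ℝ) (s : ℕ) {n : ℕ} (M : Matrix (Fin n) (Fin n) ℂ) :
    Matrix (Fin n) (Fin n) ℂ :=
  ∑ j ∈ Finset.range (s + 1), ((c j : ℂ) / (j.factorial : ℂ)) • M ^ j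

/-- Evaluation of the stability function `R(z) = ∑_{j=0}^s c_j z^j / j!` at a complex scalar. -/
def stabFun (c : ℕ → ℝ) (s : ℕ) (z : ℂ) : ℂ :=
  ∑ j ∈ Finset.range (s + 1), (c j : ℂ) * z ^ j / (j.factorial : ℂ)

/-- `c` is the coefficient sequence of a stability function of order `p` with `s` stages:
`c j = 1` for `j ≤ p`, `c (p+1) ≠ 1`, and `c j = 0` for `j > s`. -/
structure IsStabilityFunction (c : ℕ → ℝ) (p s : ℕ) : Prop where
  pos : 0 < p
  ple : p ≤ s
  low : ∀ j ≤ p, c j = 1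
  cp1 : c (p + 1) ≠ 1
  high : ∀ j, s < j → c j = 0

/-- The matrix `T_m = ∑_{j=0}^m L_S^j L_H (L_S^*)^j` from the definition of the
hypocoercivity index. -/
def Tmat {n : ℕ} (L : Matrix (Fin n) (Fin n) ℂ) (m : ℕ) : Matrix (Fin n) (Fin n) ℂ :=
  ∑ j ∈ Finset.range (m + 1), (skewPart L) ^ j * hermPart L * ((skewPart L)ᴴ) ^ j

/-- `m` is the hypocoercivity index of `L`: the smallest `m` with `T_m` negative definite. -/
def IsHCIndex {n : ℕ} (L : Matrix (Fin n) (Fin n) ℂ) (m : ℕ) : Prop :=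
  (-(Tmat L m)).PosDef ∧ ∀ k < m, ¬ (-(Tmat L k)).PosDef

/-- Strong stability of a stability function: monotonicity of the `P`-norm of the numerical
solution, for every Lyapunov stable `L` and every admissible `P`. -/
def StronglyStable (c : ℕ → ℝ) (s : ℕ) : Prop :=
  ∀ (n : ℕ) (L P : Matrix (Fin n) (Fin n) ℂ), P.PosDef →
    (-(Lᴴ * P + P * L)).PosSemidef →
    ∃ τ₀ > (0:ℝ), ∀ τ : ℝ, 0 < τ → τ ≤ τ₀ → ∀ u : Fin n → ℂ,
      (star (stabFunMat c s ((τ:ℂ) • L) *ᵥ u) ⬝ᵥ (P *ᵥ (stabFunMat c s ((τ:ℂ) • L) *ᵥ u))).re ≤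
        (star u ⬝ᵥ (P *ᵥ u)).re

/-!
Taking `P = 1` in the definition of strong stability shows that `R(τL)` is eventually a
contraction for every semi-dissipative `L`, which gives (a); the `1 × 1` matrix `L = iy` gives (b).
Conversely, if `P = BᴴB` then the Lyapunov inequality says that `BLB⁻¹` is semi-dissipative, and
`⟨R(τL)u, P R(τL)u⟩ = ‖R(τBLB⁻¹) Bu‖²`; so it suffices that `R(τL)` is eventually a contraction
for every semi-dissipative `L`. This goes by induction on the dimension. If `L` is not
asymptotically stable, it has an eigenvalue `iy` on the imaginary axis, and its eigenvector `v` is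
also an eigenvector of `Lᴴ`, because `v* L_H v = 0` forces `L_H v = 0`. A unitary change of basis
with first vector `v` then splits `L` as `iy ⊕ L'` with `L'` semi-dissipative of smaller size, and
`‖R(τL)‖ = max(|R(iτy)|, ‖R(τL')‖)`.
-/

open Filter Topology WithLp

theorem eventually_nhdsGT_zero_iff {P : ℝ → Prop} :
    (∀ᶠ τ in 𝓝[>] 0, P τ) ↔ ∃ τ₀ > 0, ∀ τ, 0 < τ → τ ≤ τ₀ → P τ := by
  simp [Filter.Eventually, mem_nhdsGT_iff_exists_Ioc_subset, Set.subset_def]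

section EuclideanNorm

variable {ι : Type*} [Fintype ι]

theorem star_dotProduct_self_eq (v : ι → ℂ) : star v ⬝ᵥ v = (‖toLp 2 v‖ : ℂ) ^ 2 := by
  rw [dotProduct_comm, ← EuclideanSpace.inner_toLp_toLp, inner_self_eq_norm_sq_to_K]
  rfl

theorem re_star_dotProduct_self (v : ι → ℂ) : (star v ⬝ᵥ v).re = ‖toLp 2 v‖ ^ 2 := by
  rw [star_dotProduct_self_eq]
  norm_cast

theorem re_star_dotProduct_conjTranspose_mul_mulVec (B : Matrix ι ι ℂ) (u : ι → ℂ) :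
    (star u ⬝ᵥ ((Bᴴ * B) *ᵥ u)).re = ‖toLp 2 (B *ᵥ u)‖ ^ 2 := by
  rw [← mulVec_mulVec, dotProduct_mulVec, ← star_mulVec, re_star_dotProduct_self]

theorem norm_le_one_iff_norm_mulVec_le [DecidableEq ι] (A : Matrix ι ι ℂ) :
    ‖A‖ ≤ 1 ↔ ∀ v, ‖toLp 2 (A *ᵥ v)‖ ≤ ‖toLp 2 v‖ := by
  rw [cstar_norm_def, ContinuousLinearMap.opNorm_le_iff zero_le_one]
  simp only [one_mul]
  exact ⟨fun h v => h (toLp 2 v), fun h x => h (ofLp x)⟩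

end EuclideanNorm

section SemiDissipative

variable {n : ℕ} {L : Matrix (Fin n) (Fin n) ℂ}

theorem isSemiDissipative_iff : IsSemiDissipative L ↔ (-(Lᴴ + L)).PosSemidef := by
  have h : -hermPart L = (1 / 2 : ℝ) • -(Lᴴ + L) := by
    rw [hermPart, add_comm, smul_neg, ← Complex.coe_smul]; norm_num
  rw [IsSemiDissipative, h]
  refine ⟨fun h2 => ?_, fun h1 => h1.smul (by norm_num)⟩
  simpa [smul_smul] using h2.smul (show (0 : ℝ) ≤ 2 by norm_num)

theorem isSemiDissipative_mul_mul {X Y : Matrix (Fin n) (Fin n) ℂ} (hXY : X * Y = 1)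
    (hL : (-(Lᴴ * (Xᴴ * X) + Xᴴ * X * L)).PosSemidef) : IsSemiDissipative (X * L * Y) := by
  have h : -((X * L * Y)ᴴ + X * L * Y) = Yᴴ * -(Lᴴ * (Xᴴ * X) + Xᴴ * X * L) * Y := by
    have hYX : Yᴴ * Xᴴ = 1 := by rw [← conjTranspose_mul, hXY, conjTranspose_one]
    simp only [conjTranspose_mul, Matrix.mul_neg, Matrix.neg_mul, Matrix.mul_add, Matrix.add_mul]
    rw [show Yᴴ * (Lᴴ * (Xᴴ * X)) * Y = Yᴴ * Lᴴ * Xᴴ * (X * Y) by noncomm_ring,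
      show Yᴴ * (Xᴴ * X * L) * Y = (Yᴴ * Xᴴ) * (X * L * Y) by noncomm_ring, hXY, hYX]
    noncomm_ring
  rw [isSemiDissipative_iff, h]
  exact hL.conjTranspose_mul_mul_same Y

theorem IsSemiDissipative.unitary_conj (hL : IsSemiDissipative L) {U : Matrix (Fin n) (Fin n) ℂ}
    (hU : U ∈ unitaryGroup (Fin n) ℂ) : IsSemiDissipative (star U * L * U) := by
  refine isSemiDissipative_mul_mul (Unitary.star_mul_self_of_mem hU) ?_
  have hUU : U * Uᴴ = 1 := Unitary.mul_star_self_of_mem hU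
  rw [star_eq_conjTranspose, conjTranspose_conjTranspose, hUU, Matrix.mul_one, Matrix.one_mul]
  exact isSemiDissipative_iff.mp hL

theorem IsSemiDissipative.submatrix (hL : IsSemiDissipative L) {m : ℕ} (e : Fin m → Fin n) :
    IsSemiDissipative (L.submatrix e e) := by
  rw [isSemiDissipative_iff] at hL ⊢
  convert hL.submatrix e using 1
  ext i j
  simp

theorem star_dotProduct_neg_add_mulVec {v : Fin n → ℂ} {μ : ℂ} (hv : L *ᵥ v = μ • v) :
    star v ⬝ᵥ (-(Lᴴ + L) *ᵥ v) = ((-2 * μ.re * ‖toLp 2 v‖ ^ 2 : ℝ) : ℂ) := by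
  rw [neg_mulVec, add_mulVec, dotProduct_neg, dotProduct_add, dotProduct_mulVec, ← star_mulVec,
    hv, star_smul, smul_dotProduct, dotProduct_smul, star_dotProduct_self_eq, smul_eq_mul,
    smul_eq_mul, ← add_mul, Complex.star_def, add_comm, Complex.add_conj]
  push_cast
  ring

theorem IsSemiDissipative.re_nonpos_of_mulVec_eq_smul (hL : IsSemiDissipative L)
    {v : Fin n → ℂ} (hv0 : v ≠ 0) {μ : ℂ} (hv : L *ᵥ v = μ • v) : μ.re ≤ 0 := by
  have h := (isSemiDissipative_iff.mp hL).dotProduct_mulVec_nonneg v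
  rw [star_dotProduct_neg_add_mulVec hv, Complex.zero_le_real] at h
  have : 0 < ‖toLp 2 v‖ := by simpa using hv0
  nlinarith [pow_pos this 2]

theorem IsSemiDissipative.conjTranspose_mulVec_eq_neg_smul (hL : IsSemiDissipative L)
    {v : Fin n → ℂ} {μ : ℂ} (hv : L *ᵥ v = μ • v) (hμ : μ.re = 0) : Lᴴ *ᵥ v = -μ • v := by
  have h := ((isSemiDissipative_iff.mp hL).dotProduct_mulVec_zero_iff v).mp
    (by rw [star_dotProduct_neg_add_mulVec hv, hμ]; simp)
  rw [neg_mulVec, neg_eq_zero, add_mulVec, hv, add_eq_zero_iff_eq_neg] at h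
  rw [h, neg_smul]

end SemiDissipative

section StabilityFunction

variable (c : ℕ → ℝ) (s : ℕ) {n : ℕ}

theorem stabFunMat_mul_mul {X Y : Matrix (Fin n) (Fin n) ℂ} (hYX : Y * X = 1)
    (M : Matrix (Fin n) (Fin n) ℂ) : stabFunMat c s (X * M * Y) = X * stabFunMat c s M * Y := by
  have hpow : ∀ j, (X * M * Y) ^ j = X * M ^ j * Y :=
    Units.conj_pow ⟨X, Y, mul_eq_one_comm.mp hYX, hYX⟩ M
  simp only [stabFunMat, hpow, Finset.mul_sum, Finset.sum_mul, Matrix.mul_smul, Matrix.smul_mul]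

theorem norm_stabFunMat_unitary_conj {U : Matrix (Fin n) (Fin n) ℂ}
    (hU : U ∈ unitaryGroup (Fin n) ℂ) (M : Matrix (Fin n) (Fin n) ℂ) :
    ‖stabFunMat c s (star U * M * U)‖ = ‖stabFunMat c s M‖ := by
  rw [stabFunMat_mul_mul c s (Unitary.mul_star_self_of_mem hU),
    CStarRing.norm_mul_mem_unitary _ hU, CStarRing.norm_mem_unitary_mul _ (Unitary.star_mem hU)]

theorem stabFunMat_smul_one (z : ℂ) :
    stabFunMat c s (z • (1 : Matrix (Fin n) (Fin n) ℂ)) = stabFun c s z • 1 := by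
  simp only [stabFunMat, stabFun, Finset.sum_smul, _root_.smul_pow, one_pow, smul_smul]
  congr! 2
  ring

end StabilityFunction

section BlockDiag

variable {k : ℕ} {M : Matrix (Fin (k + 1)) (Fin (k + 1)) ℂ} {μ : ℂ} {M' : Matrix (Fin k) (Fin k) ℂ}

/-- `M = diag(μ, M')` for the splitting `ℂ^(k+1) = ℂ × ℂ^k` given by `Fin.cons`. -/
def IsBlockDiag (M : Matrix (Fin (k + 1)) (Fin (k + 1)) ℂ) (μ : ℂ)
    (M' : Matrix (Fin k) (Fin k) ℂ) : Prop :=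
  ∀ a w, M *ᵥ Fin.cons a w = Fin.cons (μ * a) (M' *ᵥ w)

theorem IsBlockDiag.pow (h : IsBlockDiag M μ M') (j : ℕ) :
    IsBlockDiag (M ^ j) (μ ^ j) (M' ^ j) := by
  induction j with
  | zero => intro a w; simp
  | succ j ih =>
    intro a w
    rw [pow_succ', pow_succ', pow_succ', ← mulVec_mulVec, ih, h, ← mulVec_mulVec, mul_assoc]

theorem IsBlockDiag.smul (h : IsBlockDiag M μ M') (z : ℂ) :
    IsBlockDiag (z • M) (z * μ) (z • M') := by
  intro a w
  rw [smul_mulVec, h, smul_mulVec, mul_assoc]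
  exact Matrix.smul_cons z (μ * a) (M' *ᵥ w)

theorem IsBlockDiag.stabFunMat (h : IsBlockDiag M μ M') (c : ℕ → ℝ) (s : ℕ) :
    IsBlockDiag (stabFunMat c s M) (stabFun c s μ) (stabFunMat c s M') := by
  intro a w
  ext i
  simp only [_root_.stabFunMat, _root_.stabFun, sum_mulVec, smul_mulVec, (h.pow _) a w,
    Finset.sum_apply, Pi.smul_apply]
  refine Fin.cases ?_ (fun i => ?_) i
  · simp only [Fin.cons_zero, smul_eq_mul, Finset.sum_mul]
    exact Finset.sum_congr rfl fun j _ => by ring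
  · simp [Finset.sum_apply]

theorem IsBlockDiag.norm_le_one (h : IsBlockDiag M μ M') (hμ : ‖μ‖ ≤ 1) (hM' : ‖M'‖ ≤ 1) :
    ‖M‖ ≤ 1 := by
  have hsq : ∀ a (w : Fin k → ℂ), ‖toLp 2 (Fin.cons a w : Fin (k + 1) → ℂ)‖ ^ 2 =
      ‖a‖ ^ 2 + ‖toLp 2 w‖ ^ 2 := by
    intro a w
    simp [EuclideanSpace.norm_sq_eq, Fin.sum_univ_succ]
  rw [norm_le_one_iff_norm_mulVec_le] at hM' ⊢
  intro v
  rw [← Fin.cons_self_tail v, h, ← sq_le_sq₀ (norm_nonneg _) (norm_nonneg _), hsq, hsq, norm_mul]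
  gcongr
  · exact mul_le_of_le_one_left (norm_nonneg _) hμ
  · exact hM' _

theorem isBlockDiag_of_mulVec_single (hM : M *ᵥ Pi.single 0 1 = μ • Pi.single 0 1)
    (hMH : Mᴴ *ᵥ Pi.single 0 1 = star μ • Pi.single 0 1) :
    IsBlockDiag M μ (M.submatrix Fin.succ Fin.succ) := by
  have h00 : M 0 0 = μ := by simpa using congrFun hM 0
  have hcol : ∀ i : Fin k, M i.succ 0 = 0 := fun i => by simpa using congrFun hM i.succ
  have hrow : ∀ j : Fin k, M 0 j.succ = 0 := fun j => by simpa using congrFun hMH j.succ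
  intro a w
  ext i
  refine Fin.cases ?_ (fun i => ?_) i <;>
  simp [mulVec, dotProduct, Fin.sum_univ_succ, h00, hcol, hrow]

end BlockDiag

section Eigenvectors

variable {ι : Type*} [Fintype ι] [DecidableEq ι]

theorem exists_norm_eq_one_mulVec_eq_smul_of_mem_spectrum {L : Matrix ι ι ℂ} {μ : ℂ}
    (hμ : μ ∈ spectrum ℂ L) :
    ∃ v : ι → ℂ, ‖toLp 2 v‖ = 1 ∧ L *ᵥ v = μ • v := by
  rw [← AlgEquiv.spectrum_eq Matrix.toLinAlgEquiv' L,
    ← Module.End.hasEigenvalue_iff_mem_spectrum] at hμ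
  obtain ⟨v, hv⟩ := hμ.exists_hasEigenvector
  have hv0 : ‖toLp 2 v‖ ≠ 0 := by simpa using hv.2
  refine ⟨(‖toLp 2 v‖⁻¹ : ℂ) • v, ?_, ?_⟩
  · rw [toLp_smul, norm_smul, norm_inv, Complex.norm_real, norm_norm, inv_mul_cancel₀ hv0]
  · rw [mulVec_smul, ← Matrix.toLinAlgEquiv'_apply, hv.apply_eq_smul, smul_comm]

theorem exists_unitary_mulVec_single_eq (i : ι) {v : ι → ℂ} (hv : ‖toLp 2 v‖ = 1) :
    ∃ U ∈ unitaryGroup ι ℂ, U *ᵥ Pi.single i 1 = v := by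
  have hon : Orthonormal ℂ (({i} : Set ι).domRestrict fun _ => toLp 2 v) := by
    rw [orthonormal_iff_ite]
    rintro ⟨a, rfl⟩ ⟨b, rfl⟩
    simp [Set.domRestrict_apply, inner_self_eq_norm_sq_to_K, hv]
  obtain ⟨b, hb⟩ := hon.exists_orthonormalBasis_extension_of_card_eq (by simp)
  refine ⟨_, (EuclideanSpace.basisFun ι ℂ).toMatrix_orthonormalBasis_mem_unitary b, ?_⟩
  ext j
  rw [mulVec_single_one, col_apply, Module.Basis.toMatrix_apply, hb i rfl]
  simp

end Eigenvectors

theorem IsSemiDissipative.exists_unitary_isBlockDiag {k : ℕ}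
    {L : Matrix (Fin (k + 1)) (Fin (k + 1)) ℂ} (hL : IsSemiDissipative L) (hst : ¬IsAsympStable L) :
    ∃ y : ℝ, ∃ U ∈ unitaryGroup (Fin (k + 1)) ℂ,
      IsBlockDiag (star U * L * U) (Complex.I * y)
        ((star U * L * U).submatrix Fin.succ Fin.succ) := by
  simp only [IsAsympStable, not_forall, not_lt] at hst
  obtain ⟨μ, hμ, hμre⟩ := hst
  obtain ⟨v, hv1, hv⟩ := exists_norm_eq_one_mulVec_eq_smul_of_mem_spectrum hμ
  have hre : μ.re = 0 :=
    le_antisymm (hL.re_nonpos_of_mulVec_eq_smul (by rintro rfl; simp at hv1) hv) hμre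
  have hμI : μ = Complex.I * μ.im := by apply Complex.ext <;> simp [hre]
  obtain ⟨U, hU, hUv⟩ := exists_unitary_mulVec_single_eq 0 hv1
  set M := star U * L * U
  have hM : M *ᵥ Pi.single 0 1 = μ • Pi.single 0 1 := by
    rw [← mulVec_mulVec, hUv, ← mulVec_mulVec, hv, mulVec_smul, ← hUv, mulVec_mulVec,
      Unitary.star_mul_self_of_mem hU, one_mulVec]
  have hMH : Mᴴ *ᵥ Pi.single 0 1 = star μ • Pi.single 0 1 := by
    rw [(hL.unitary_conj hU).conjTranspose_mulVec_eq_neg_smul hM hre]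
    congr 1
    apply Complex.ext <;> simp [hre]
  exact ⟨μ.im, U, hU, hμI ▸ isBlockDiag_of_mulVec_single hM hMH⟩

section Contractivity

variable {c : ℕ → ℝ} {s : ℕ}

theorem IsSemiDissipative.eventually_norm_stabFunMat_le_one
    (hstable : ∀ (n : ℕ) (L : Matrix (Fin n) (Fin n) ℂ), IsSemiDissipative L → IsAsympStable L →
      ∀ᶠ τ : ℝ in 𝓝[>] 0, ‖stabFunMat c s ((τ : ℂ) • L)‖ ≤ 1)
    (himag : ∀ y : ℝ, ∀ᶠ τ : ℝ in 𝓝[>] 0, ‖stabFun c s (Complex.I * τ * y)‖ ≤ 1) :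
    ∀ {n : ℕ} {L : Matrix (Fin n) (Fin n) ℂ}, IsSemiDissipative L →
      ∀ᶠ τ : ℝ in 𝓝[>] 0, ‖stabFunMat c s ((τ : ℂ) • L)‖ ≤ 1
  | 0, L, _ => by simp [Subsingleton.elim _ (0 : Matrix (Fin 0) (Fin 0) ℂ)]
  | k + 1, L, hL => by
    by_cases hst : IsAsympStable L
    · exact hstable _ L hL hst
    obtain ⟨y, U, hU, hM⟩ := hL.exists_unitary_isBlockDiag hst
    have hM' := (hL.unitary_conj hU).submatrix Fin.succ
    filter_upwards [eventually_norm_stabFunMat_le_one hstable himag hM', himag y] with τ hτM' hτy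
    rw [← norm_stabFunMat_unitary_conj c s hU, Matrix.mul_smul, Matrix.smul_mul]
    refine ((hM.smul τ).stabFunMat c s).norm_le_one ?_ hτM'
    rwa [← mul_assoc, mul_comm (τ : ℂ)]

end Contractivity

theorem Matrix.PosDef.exists_isUnit_eq_conjTranspose_mul {ι : Type*} [Fintype ι] [DecidableEq ι]
    {P : Matrix ι ι ℂ} (hP : P.PosDef) : ∃ B : Matrix ι ι ℂ, IsUnit B ∧ P = Bᴴ * B := by
  open scoped MatrixOrder in
  obtain ⟨B, rfl⟩ := CStarAlgebra.nonneg_iff_eq_star_mul_self.mp hP.posSemidef.nonneg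
  exact ⟨B, isUnit_of_mul_isUnit_right hP.isUnit, rfl⟩

theorem stronglyStable_iff_forall_isSemiDissipative (c : ℕ → ℝ) (s : ℕ) :
    StronglyStable c s ↔ ∀ (n : ℕ) (L : Matrix (Fin n) (Fin n) ℂ), IsSemiDissipative L →
      ∀ᶠ τ : ℝ in 𝓝[>] 0, ‖stabFunMat c s ((τ : ℂ) • L)‖ ≤ 1 := by
  simp only [StronglyStable, ← eventually_nhdsGT_zero_iff]
  constructor
  · intro h n L hL
    have hL1 : (-(Lᴴ * 1 + 1 * L)).PosSemidef := by simpa using isSemiDissipative_iff.mp hL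
    filter_upwards [h n L 1 PosDef.one hL1] with τ hτ
    rw [norm_le_one_iff_norm_mulVec_le]
    intro u
    have hu := hτ u
    simp only [one_mulVec, re_star_dotProduct_self] at hu
    exact (sq_le_sq₀ (norm_nonneg _) (norm_nonneg _)).mp hu
  · intro h n L P hP hLP
    obtain ⟨B, hB, rfl⟩ := hP.exists_isUnit_eq_conjTranspose_mul
    have hdet : IsUnit B.det := (isUnit_iff_isUnit_det B).mp hB
    filter_upwards [h n _ (isSemiDissipative_mul_mul (mul_nonsing_inv B hdet) hLP)] with τ hτ u
    have hconj : B *ᵥ (stabFunMat c s ((τ : ℂ) • L) *ᵥ u) =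
        stabFunMat c s ((τ : ℂ) • (B * L * B⁻¹)) *ᵥ (B *ᵥ u) := by
      rw [← Matrix.smul_mul, ← Matrix.mul_smul, stabFunMat_mul_mul c s (nonsing_inv_mul B hdet),
        mulVec_mulVec, mulVec_mulVec, Matrix.mul_assoc, nonsing_inv_mul B hdet, Matrix.mul_one]
    rw [re_star_dotProduct_conjTranspose_mul_mulVec, re_star_dotProduct_conjTranspose_mul_mulVec,
      hconj]
    gcongr
    exact (norm_le_one_iff_norm_mulVec_le _).mp hτ _

theorem isSemiDissipative_I_smul_one {n : ℕ} (y : ℝ) :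
    IsSemiDissipative ((Complex.I * y) • (1 : Matrix (Fin n) (Fin n) ℂ)) := by
  rw [isSemiDissipative_iff]
  convert PosSemidef.zero using 1
  ext i j
  simp

theorem norm_stabFunMat_smul_one (c : ℕ → ℝ) (s : ℕ) {n : ℕ} [NeZero n] (z : ℂ) :
    ‖stabFunMat c s (z • (1 : Matrix (Fin n) (Fin n) ℂ))‖ = ‖stabFun c s z‖ := by
  rw [stabFunMat_smul_one, norm_smul, CStarRing.norm_one, mul_one]

theorem stmt0_general (c : ℕ → ℝ) (s : ℕ) :
    StronglyStable c s ↔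
      ((∀ (n : ℕ) (L : Matrix (Fin n) (Fin n) ℂ), IsSemiDissipative L → IsAsympStable L →
          ∃ τ₀ > (0:ℝ), ∀ τ : ℝ, 0 < τ → τ ≤ τ₀ → ‖stabFunMat c s ((τ:ℂ) • L)‖ ≤ 1) ∧
       (∀ y : ℝ, ∃ τ₀ > (0:ℝ), ∀ τ : ℝ, 0 < τ → τ ≤ τ₀ →
          ‖stabFun c s (Complex.I * (τ:ℂ) * (y:ℂ))‖ ≤ 1)) := by
  simp only [stronglyStable_iff_forall_isSemiDissipative, ← eventually_nhdsGT_zero_iff]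
  refine ⟨fun h => ⟨fun n L hL _ => h n L hL, fun y => ?_⟩,
    fun ⟨hstable, himag⟩ n L hL => hL.eventually_norm_stabFunMat_le_one hstable himag⟩
  filter_upwards [h 1 _ (isSemiDissipative_I_smul_one y)] with τ hτ
  rwa [smul_smul, norm_stabFunMat_smul_one, ← mul_assoc, mul_comm (τ : ℂ)] at hτ

/-- An explicit Runge–Kutta stability function is strongly stable iff it is
strongly stable w.r.t. asymptotically stable, semi-dissipative matrices (in spectral norm)
and w.r.t. purely imaginary scalars. -/
theorem stmt0 (c : ℕ → ℝ) (p s : ℕ) (h : IsStabilityFunction c p s) :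
    StronglyStable c s ↔
      ((∀ (n : ℕ) (L : Matrix (Fin n) (Fin n) ℂ), IsSemiDissipative L → IsAsympStable L →
          ∃ τ₀ > (0:ℝ), ∀ τ : ℝ, 0 < τ → τ ≤ τ₀ → ‖stabFunMat c s ((τ:ℂ) • L)‖ ≤ 1) ∧
       (∀ y : ℝ, ∃ τ₀ > (0:ℝ), ∀ τ : ℝ, 0 < τ → τ ≤ τ₀ →
          ‖stabFun c s (Complex.I * (τ:ℂ) * (y:ℂ))‖ ≤ 1)) :=
  stmt0_general c s
end
end

section
/- Let R be a stability function of order p ∈ ℕ with s stages. If p is odd and γ_{p+1} := (−1)^{(p+1)/2}(1 − c_{p+1}) > 0, or if p is even and δ_{p+1} := (−1)^{p/2}(c_{p+2} − (p+2)c_{p+1} + (p+1)) > 0, then R is locally stable on the imaginary axis, i.e., there exists Z > 0 such that |R(iy)| ≤ 1 for all y ∈ ℝ with |y| ≤ Z. -/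
open Matrix Polynomial
open scoped Matrix.Norms.L2Operator ComplexOrder

noncomputable section

/-!
On the imaginary axis, `|R(iy)|² - 1` is the value at `iy` of the real polynomial
`D(z) = R(z) R(-z) - 1`. Because `e^z e^{-z} = 1`, the coefficient of `z^m` in `D` (for `m ≠ 0`)
is `∑_{j+k=m} (c_j c_k - 1) (-1)^k / (j! k!)`, to which only pairs with `j > p` or `k > p`
contribute. So the coefficients of `D` up to `z^p` vanish; that of `z^(p+1)` is
`2 (c_{p+1} - 1)/(p+1)!` for odd `p`, while for even `p` it is zero and that of `z^(p+2)` is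
`2 (c_{p+2} - (p+2) c_{p+1} + p + 1)/(p+2)!`. Either way the lowest term of `D(iy)` is
`-2 γ_{p+1} y^(p+1)/(p+1)!` resp. `-2 δ_{p+1} y^(p+2)/(p+2)!`, which is negative for `y ≠ 0`
and dominates near `y = 0`.
-/

open Complex ComplexConjugate Finset Nat Filter Topology

lemma eventually_re_aeval_I_mul_nonpos {G : ℝ[X]} {t : ℕ} (hlow : ∀ m < 2 * t, G.coeff m = 0)
    (hlead : (-1) ^ t * G.coeff (2 * t) < 0) :
    ∀ᶠ y : ℝ in 𝓝 0, (aeval (I * y) G).re ≤ 0 := by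
  obtain ⟨H, rfl⟩ := X_pow_dvd_iff.mpr hlow
  have hH : Continuous fun y : ℝ => (-1) ^ t * (aeval (I * y) H).re := by fun_prop
  have hH0 : (-1) ^ t * (aeval (I * (0 : ℝ)) H).re < 0 := by
    simpa [aeval_def, eval₂_at_zero, coeff_X_pow_mul'] using hlead
  filter_upwards [hH.continuousAt.eventually (gt_mem_nhds hH0)] with y hy
  have hIy : (I * y) ^ (2 * t) = ((-1) ^ t * y ^ (2 * t) : ℝ) := by
    push_cast
    rw [mul_pow, pow_mul, I_sq]
  rw [map_mul, map_pow, aeval_X, hIy, re_ofReal_mul]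
  have hy2 : 0 ≤ y ^ (2 * t) := (even_two_mul t).pow_nonneg y
  linarith [mul_nonpos_of_nonneg_of_nonpos hy2 hy.le]

def stabPoly (c : ℕ → ℝ) (s : ℕ) (ε : ℝ) : ℝ[X] :=
  ∑ j ∈ range (s + 1), C (c j / j ! * ε ^ j) * X ^ j

lemma aeval_stabPoly (c : ℕ → ℝ) (s : ℕ) (ε : ℝ) (z : ℂ) :
    aeval z (stabPoly c s ε) = stabFun c s (ε * z) := by
  simp only [stabPoly, stabFun, map_sum, map_mul, aeval_C, aeval_X_pow]
  refine sum_congr rfl fun j _ => ?_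
  simp
  ring

lemma coeff_stabPoly {c : ℕ → ℝ} {s : ℕ} (hc : ∀ j, s < j → c j = 0) (ε : ℝ) (j : ℕ) :
    (stabPoly c s ε).coeff j = c j / j ! * ε ^ j := by
  simp only [stabPoly, finsetSum_coeff, coeff_C_mul_X_pow, sum_ite_eq, mem_range]
  split_ifs with hj
  · rfl
  · simp [hc j (by omega)]

lemma stabFun_conj (c : ℕ → ℝ) (s : ℕ) (z : ℂ) :
    stabFun c s (conj z) = conj (stabFun c s z) := by
  simp [stabFun]

def stabDefect (c : ℕ → ℝ) (s : ℕ) : ℝ[X] :=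
  stabPoly c s 1 * stabPoly c s (-1) - 1

lemma re_aeval_I_mul_stabDefect (c : ℕ → ℝ) (s : ℕ) (y : ℝ) :
    (aeval (I * y) (stabDefect c s)).re = ‖stabFun c s (I * y)‖ ^ 2 - 1 := by
  have hconj : (-1 : ℝ) * (I * y) = conj (I * y) := by simp
  rw [stabDefect, map_sub, map_mul, aeval_stabPoly, aeval_stabPoly, hconj, stabFun_conj,
    ofReal_one, one_mul, mul_conj', map_one]
  norm_cast

lemma sum_antidiagonal_neg_one_pow_div_factorial (m : ℕ) :
    ∑ x ∈ antidiagonal m, (-1 : ℝ) ^ x.2 / (x.1 ! * x.2 !) = if m = 0 then 1 else 0 := by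
  have h := congrArg (PowerSeries.coeff m) (PowerSeries.exp_mul_exp_eq_exp_add (1 : ℝ) (-1))
  simp only [PowerSeries.coeff_mul, PowerSeries.coeff_rescale, PowerSeries.coeff_exp, one_pow,
    one_mul, add_neg_cancel, zero_pow_eq, map_div₀, map_one, map_natCast] at h
  calc _ = (if m = 0 then 1 else 0) * (1 / m ! : ℝ) := by
        rw [← h]
        exact sum_congr rfl fun x _ => by ring
    _ = _ := by split_ifs with hm <;> simp [hm]

lemma coeff_stabDefect {c : ℕ → ℝ} {s : ℕ} (hc : ∀ j, s < j → c j = 0) {m : ℕ} (hm : m ≠ 0) :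
    (stabDefect c s).coeff m =
      ∑ x ∈ antidiagonal m, (c x.1 * c x.2 - 1) * (-1) ^ x.2 / (x.1 ! * x.2 !) := by
  have hexp := sum_antidiagonal_neg_one_pow_div_factorial m
  rw [if_neg hm] at hexp
  rw [stabDefect, coeff_sub, coeff_mul, coeff_one, if_neg hm, sub_zero, ← sub_zero (∑ x ∈ _, _),
    ← hexp, ← sum_sub_distrib]
  refine sum_congr rfl fun x _ => ?_
  rw [coeff_stabPoly hc, coeff_stabPoly hc]
  ring

namespace IsStabilityFunction

variable {c : ℕ → ℝ} {p s : ℕ} (h : IsStabilityFunction c p s)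
include h

lemma defect_term_eq_zero {j k : ℕ} (hj : j ≤ p) (hk : k ≤ p) :
    (c j * c k - 1) * (-1 : ℝ) ^ k / (j ! * k !) = 0 := by
  rw [h.low j hj, h.low k hk]
  ring

lemma coeff_stabDefect_of_le {m : ℕ} (hm : m ≤ p) : (stabDefect c s).coeff m = 0 := by
  rcases eq_or_ne m 0 with rfl | hm0
  · simp [stabDefect, mul_coeff_zero, coeff_stabPoly h.high, h.low 0 (zero_le p)]
  · rw [coeff_stabDefect h.high hm0]
    refine sum_eq_zero fun x hx => ?_
    rw [HasAntidiagonal.mem_antidiagonal] at hx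
    exact h.defect_term_eq_zero (by omega) (by omega)

lemma coeff_stabDefect_succ :
    (stabDefect c s).coeff (p + 1) = (1 + (-1) ^ (p + 1)) * (c (p + 1) - 1) / (p + 1)! := by
  obtain ⟨n, rfl⟩ := exists_add_one_eq.mpr h.pos
  -- peel off the pairs `(p + 1, 0)` and `(0, p + 1)`; in all others both entries are `≤ p`
  rw [coeff_stabDefect h.high (succ_ne_zero _), sum_antidiagonal_succ', sum_antidiagonal_succ,
    sum_eq_zero fun x hx => h.defect_term_eq_zero
      (by dsimp only; have := HasAntidiagonal.mem_antidiagonal.mp hx; omega)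
      (by dsimp only; have := HasAntidiagonal.mem_antidiagonal.mp hx; omega)]
  simp [h.low 0 (zero_le _)]
  ring

lemma coeff_stabDefect_add_two (hp : Even p) :
    (stabDefect c s).coeff (p + 2) =
      2 * (c (p + 2) - (p + 2) * c (p + 1) + (p + 1)) / (p + 2)! := by
  obtain ⟨n, rfl⟩ : ∃ n, p = n + 2 := ⟨p - 2, by have := h.pos; obtain ⟨t, ht⟩ := hp; omega⟩
  -- peel off the pairs `(p + 2, 0)`, `(0, p + 2)`, `(p + 1, 1)` and `(1, p + 1)`
  rw [coeff_stabDefect h.high (succ_ne_zero _), sum_antidiagonal_succ', sum_antidiagonal_succ,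
    sum_antidiagonal_succ', sum_antidiagonal_succ,
    sum_eq_zero fun x hx => h.defect_term_eq_zero
      (by dsimp only; have := HasAntidiagonal.mem_antidiagonal.mp hx; omega)
      (by dsimp only; have := HasAntidiagonal.mem_antidiagonal.mp hx; omega)]
  have hodd : (-1 : ℝ) ^ (n + 3) = -1 := hp.add_one.neg_one_pow
  have heven : (-1 : ℝ) ^ (n + 4) = 1 := (hp.add even_two).neg_one_pow
  simp [h.low 0 (zero_le _), h.low 1 (by omega), add_assoc, hodd, heven, factorial_succ (n + 3)]
  field_simp
  ring

lemma exists_coeff_stabDefect_lowest_neg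
    (hcond : (Odd p ∧ 0 < (-1 : ℝ) ^ ((p + 1) / 2) * (1 - c (p + 1))) ∨
      (Even p ∧ 0 < (-1 : ℝ) ^ (p / 2) * (c (p + 2) - (p + 2) * c (p + 1) + (p + 1)))) :
    ∃ t, (∀ m < 2 * t, (stabDefect c s).coeff m = 0) ∧
      (-1) ^ t * (stabDefect c s).coeff (2 * t) < 0 := by
  rcases hcond with ⟨⟨t, rfl⟩, hγ⟩ | ⟨⟨t, rfl⟩, hδ⟩
  · refine ⟨t + 1, fun m hm => h.coeff_stabDefect_of_le (by omega), ?_⟩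
    rw [show (2 * t + 1 + 1) / 2 = t + 1 by omega] at hγ
    have hsign : (-1 : ℝ) ^ (2 * t + 1 + 1) = 1 := Even.neg_one_pow ⟨t + 1, by ring⟩
    have hfac : (0 : ℝ) < (2 * t + 1 + 1)! := by positivity
    have hγ' := div_pos (mul_pos two_pos hγ) hfac
    rw [show 2 * (t + 1) = 2 * t + 1 + 1 by ring, h.coeff_stabDefect_succ, hsign]
    linear_combination hγ'
  · have hp : Even (t + t) := ⟨t, rfl⟩
    refine ⟨t + 1, fun m hm => ?_, ?_⟩
    · rcases (show m ≤ t + t ∨ m = t + t + 1 by omega) with hm | rfl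
      · exact h.coeff_stabDefect_of_le hm
      · rw [h.coeff_stabDefect_succ, hp.add_one.neg_one_pow]
        ring
    · rw [show (t + t) / 2 = t by omega] at hδ
      have hfac : (0 : ℝ) < (t + t + 2)! := by positivity
      have hδ' := div_pos (mul_pos two_pos hδ) hfac
      rw [show 2 * (t + 1) = t + t + 2 by ring, h.coeff_stabDefect_add_two hp]
      linear_combination hδ'

end IsStabilityFunction

/-- positivity of `γ_{p+1}` (odd `p`) resp. `δ_{p+1}` (even `p`) implies local
stability on the imaginary axis. -/
theorem stmt6 (c : ℕ → ℝ) (p s : ℕ) (h : IsStabilityFunction c p s)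
    (hcond :
      (Odd p ∧ 0 < (-1 : ℝ) ^ ((p + 1) / 2) * (1 - c (p + 1))) ∨
      (Even p ∧ 0 < (-1 : ℝ) ^ (p / 2) * (c (p + 2) - (p + 2) * c (p + 1) + (p + 1)))) :
    ∃ Z > (0:ℝ), ∀ y : ℝ, |y| ≤ Z → ‖stabFun c s (Complex.I * (y:ℂ))‖ ≤ 1 := by
  obtain ⟨t, hlow, hlead⟩ := h.exists_coeff_stabDefect_lowest_neg hcond
  have hstable : ∀ᶠ y : ℝ in 𝓝 0, ‖stabFun c s (I * y)‖ ≤ 1 := by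
    filter_upwards [eventually_re_aeval_I_mul_nonpos hlow hlead] with y hy
    rw [re_aeval_I_mul_stabDefect] at hy
    exact (sq_le_one_iff₀ (norm_nonneg _)).mp (by linarith)
  obtain ⟨Z, hZ, hball⟩ := Metric.nhds_basis_closedBall.eventually_iff.mp hstable
  exact ⟨Z, hZ, fun y hy => hball (by simpa using hy)⟩
end
end

section
/- Let L ∈ ℂ^{n×n} be semi-dissipative. Then L has an eigenvalue on the imaginary axis (i.e., an eigenvalue with real part equal to zero) if and only if there exists a nonzero vector v ∈ ℂ^n which is an eigenvector of L_S and satisfies L_H v = 0. -/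
/-!
An eigenpair `L v = μ v` gives `v* L_H v = (Re μ) ‖v‖²`, because `v* L_H v` is the real part of
`v* L v`. If `Re μ = 0`, negative semidefiniteness of `L_H` turns `v* L_H v = 0` into `L_H v = 0`,
and then `L_S v = L v = μ v`. Conversely, `L_H v = 0` and `L_S v = μ v` make `v` an eigenvector of
`L = L_H + L_S` for `μ`, and `(Re μ) ‖v‖² = v* L_H v = 0`.
-/

open Matrix Polynomial
open scoped Matrix.Norms.L2Operator ComplexOrder

noncomputable section

theorem Matrix.mem_spectrum_iff_exists_mulVec_eq_smul {K ι : Type*} [Field K] [Fintype ι]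
    [DecidableEq ι] (A : Matrix ι ι K) (μ : K) :
    μ ∈ spectrum K A ↔ ∃ v ≠ 0, A *ᵥ v = μ • v := by
  rw [← Matrix.spectrum_toLin', ← Module.End.hasEigenvalue_iff_mem_spectrum,
    Module.End.hasEigenvalue_iff, Submodule.ne_bot_iff]
  simp only [Module.End.mem_eigenspace_iff, Matrix.toLin'_apply, and_comm]

theorem Matrix.star_dotProduct_conjTranspose_mulVec {R ι : Type*} [CommSemiring R] [StarRing R]
    [Fintype ι] (M : Matrix ι ι R) (v : ι → R) :
    star v ⬝ᵥ Mᴴ *ᵥ v = star (star v ⬝ᵥ M *ᵥ v) := by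
  rw [star_dotProduct, star_mulVec, conjTranspose_conjTranspose, dotProduct_mulVec]

theorem hermPart_add_skewPart {n : ℕ} (L : Matrix (Fin n) (Fin n) ℂ) :
    hermPart L + skewPart L = L := by
  unfold hermPart skewPart
  module

theorem hermPart_mulVec_add_skewPart_mulVec {n : ℕ} (L : Matrix (Fin n) (Fin n) ℂ)
    (v : Fin n → ℂ) : hermPart L *ᵥ v + skewPart L *ᵥ v = L *ᵥ v := by
  rw [← add_mulVec, hermPart_add_skewPart]

theorem star_dotProduct_hermPart_mulVec {n : ℕ} (L : Matrix (Fin n) (Fin n) ℂ) (v : Fin n → ℂ) :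
    star v ⬝ᵥ hermPart L *ᵥ v = ((star v ⬝ᵥ L *ᵥ v).re : ℂ) := by
  rw [hermPart, smul_mulVec, add_mulVec, dotProduct_smul, dotProduct_add,
    star_dotProduct_conjTranspose_mulVec, Complex.star_def, Complex.re_eq_add_conj, smul_eq_mul]
  ring

theorem star_dotProduct_hermPart_mulVec_of_mulVec_eq_smul {n : ℕ} {L : Matrix (Fin n) (Fin n) ℂ}
    {v : Fin n → ℂ} {μ : ℂ} (h : L *ᵥ v = μ • v) :
    star v ⬝ᵥ hermPart L *ᵥ v = μ.re * (star v ⬝ᵥ v) := by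
  obtain ⟨r, hr⟩ : ∃ r : ℝ, star v ⬝ᵥ v = r :=
    ⟨_, (Complex.conj_eq_iff_re.1 (star_dotProduct v v).symm).symm⟩
  rw [star_dotProduct_hermPart_mulVec, h, dotProduct_smul, smul_eq_mul, hr, Complex.re_mul_ofReal]
  push_cast
  ring

/-- a semi-dissipative matrix has a purely imaginary eigenvalue iff some
eigenvector of `L_S` lies in the kernel of `L_H`. -/
theorem stmt10 {n : ℕ} (L : Matrix (Fin n) (Fin n) ℂ) (hsd : IsSemiDissipative L) :
    (∃ μ ∈ spectrum ℂ L, μ.re = 0) ↔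
      ∃ v : Fin n → ℂ, v ≠ 0 ∧ (∃ μ : ℂ, skewPart L *ᵥ v = μ • v) ∧
        hermPart L *ᵥ v = 0 := by
  constructor
  · rintro ⟨μ, hμ, hre⟩
    obtain ⟨v, hv, hLv⟩ := (mem_spectrum_iff_exists_mulVec_eq_smul L μ).1 hμ
    have hHv : hermPart L *ᵥ v = 0 := by
      have hq : star v ⬝ᵥ (-hermPart L) *ᵥ v = 0 := by
        rw [neg_mulVec, dotProduct_neg, star_dotProduct_hermPart_mulVec_of_mulVec_eq_smul hLv,
          hre, Complex.ofReal_zero, zero_mul, neg_zero]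
      simpa only [neg_mulVec, neg_eq_zero] using (hsd.dotProduct_mulVec_zero_iff v).1 hq
    refine ⟨v, hv, ⟨μ, ?_⟩, hHv⟩
    rw [← hLv, ← hermPart_mulVec_add_skewPart_mulVec L v, hHv, zero_add]
  · rintro ⟨v, hv, ⟨μ, hSv⟩, hHv⟩
    have hLv : L *ᵥ v = μ • v := by
      rw [← hermPart_mulVec_add_skewPart_mulVec, hHv, hSv, zero_add]
    refine ⟨μ, (mem_spectrum_iff_exists_mulVec_eq_smul L μ).2 ⟨v, hv, hLv⟩, ?_⟩
    have h := star_dotProduct_hermPart_mulVec_of_mulVec_eq_smul hLv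
    rw [hHv, dotProduct_zero, eq_comm, mul_eq_zero] at h
    exact_mod_cast h.resolve_right (dotProduct_star_self_eq_zero.not.2 hv)
end
end

section
/- Let L ∈ ℂ^{n×n} be semi-dissipative with hypocoercivity index m ≥ 1, i.e., T_m := Σ_{j=0}^m L_S^j L_H (L_S*)^j is negative definite and T_{m−1} is not negative definite. Then there exists a vector u₀ ∈ ℂ^n with ‖u₀‖ = 1 such that L_H (L_S)^j u₀ = 0 for all 0 ≤ j ≤ m−1 and L_H (L_S)^m u₀ ≠ 0. -/
open Matrix Polynomial
open scoped Matrix.Norms.L2Operator ComplexOrder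

noncomputable section

/-!
Semi-dissipativity makes every summand `L_S^j L_H (L_S^j)*` of `T_k` negative semidefinite, so
`T_k u = 0` holds exactly when `L_H (L_S*)^j u = 0` for all `j ≤ k`, and `L_S* = -L_S` lets us
drop the adjoint. Since `T_{m-1}` is semidefinite but not definite, it is singular; a normalized
kernel vector satisfies the first `m` conditions, and it cannot satisfy the last one as well
because `T_m` is definite.
-/

namespace Matrix

variable {𝕜 ι m n : Type*} [RCLike 𝕜] [Fintype n]

theorem sum_mulVec_eq_zero_iff_of_posSemidef {s : Finset ι} {A : ι → Matrix n n 𝕜}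
    (hA : ∀ i ∈ s, (A i).PosSemidef) (x : n → 𝕜) :
    (∑ i ∈ s, A i) *ᵥ x = 0 ↔ ∀ i ∈ s, A i *ᵥ x = 0 := by
  rw [← (posSemidef_sum s hA).dotProduct_mulVec_zero_iff, sum_mulVec, dotProduct_sum,
    Finset.sum_eq_zero_iff_of_nonneg fun i hi => (hA i hi).dotProduct_mulVec_nonneg x]
  exact forall₂_congr fun i hi => (hA i hi).dotProduct_mulVec_zero_iff x

theorem PosSemidef.mul_mul_conjTranspose_mulVec_eq_zero_iff [Fintype m] {A : Matrix n n 𝕜}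
    (hA : A.PosSemidef) (B : Matrix m n 𝕜) (x : m → 𝕜) :
    (B * A * Bᴴ) *ᵥ x = 0 ↔ A *ᵥ (Bᴴ *ᵥ x) = 0 := by
  rw [← (hA.mul_mul_conjTranspose_same B).dotProduct_mulVec_zero_iff,
    ← hA.dotProduct_mulVec_zero_iff, ← mulVec_mulVec, ← mulVec_mulVec, dotProduct_mulVec,
    star_mulVec, conjTranspose_conjTranspose]

theorem mulVec_neg_pow_mulVec_eq_zero_iff {R : Type*} [Ring R] [DecidableEq n]
    (A S : Matrix n n R) (j : ℕ) (x : n → R) :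
    A *ᵥ ((-S) ^ j *ᵥ x) = 0 ↔ A *ᵥ (S ^ j *ᵥ x) = 0 := by
  rcases Nat.even_or_odd j with hj | hj
  · rw [hj.neg_pow]
  · rw [hj.neg_pow, neg_mulVec, mulVec_neg, neg_eq_zero]

end Matrix

theorem exists_smul_sum_norm_sq_eq_one {𝕜 ι : Type*} [RCLike 𝕜] [Fintype ι] {x : ι → 𝕜}
    (hx : x ≠ 0) : ∃ c : 𝕜, c ≠ 0 ∧ ∑ i, ‖(c • x) i‖ ^ 2 = 1 := by
  have hr : ‖WithLp.toLp 2 x‖ ≠ 0 := by simpa using hx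
  refine ⟨(‖WithLp.toLp 2 x‖ : 𝕜)⁻¹, by simpa using hr, ?_⟩
  simp only [Pi.smul_apply, norm_smul, mul_pow, ← Finset.mul_sum]
  rw [← EuclideanSpace.norm_sq_eq]
  simp [hr]

section HypocoercivityIndex

variable {n : ℕ}

theorem skewPart_conjTranspose (L : Matrix (Fin n) (Fin n) ℂ) :
    (skewPart L)ᴴ = -skewPart L := by
  simp [skewPart, conjTranspose_smul, conjTranspose_sub, smul_sub]

theorem neg_Tmat_eq_sum (L : Matrix (Fin n) (Fin n) ℂ) (k : ℕ) :
    -Tmat L k =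
      ∑ j ∈ Finset.range (k + 1), skewPart L ^ j * -hermPart L * (skewPart L ^ j)ᴴ := by
  simp [Tmat, conjTranspose_pow, ← Finset.sum_neg_distrib]

theorem IsSemiDissipative.neg_Tmat_posSemidef {L : Matrix (Fin n) (Fin n) ℂ}
    (hsd : IsSemiDissipative L) (k : ℕ) : (-Tmat L k).PosSemidef := by
  rw [neg_Tmat_eq_sum]
  exact posSemidef_sum _ fun j _ => hsd.mul_mul_conjTranspose_same _

theorem IsSemiDissipative.neg_Tmat_mulVec_eq_zero_iff {L : Matrix (Fin n) (Fin n) ℂ}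
    (hsd : IsSemiDissipative L) (k : ℕ) (x : Fin n → ℂ) :
    -Tmat L k *ᵥ x = 0 ↔ ∀ j ≤ k, hermPart L *ᵥ (skewPart L ^ j *ᵥ x) = 0 := by
  rw [neg_Tmat_eq_sum,
    sum_mulVec_eq_zero_iff_of_posSemidef fun j _ => hsd.mul_mul_conjTranspose_same _]
  simp only [Finset.mem_range, Nat.lt_succ_iff]
  refine forall₂_congr fun j _ => ?_
  rw [hsd.mul_mul_conjTranspose_mulVec_eq_zero_iff, conjTranspose_pow, skewPart_conjTranspose,
    neg_mulVec, neg_eq_zero, mulVec_neg_pow_mulVec_eq_zero_iff]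

end HypocoercivityIndex

/-- if `L` is semi-dissipative with hypocoercivity index `m ≥ 1`, then there is
a normalized vector `u₀` with `L_H L_S^j u₀ = 0` for `0 ≤ j ≤ m-1` and `L_H L_S^m u₀ ≠ 0`. -/
theorem stmt14 {n : ℕ} (L : Matrix (Fin n) (Fin n) ℂ) (hsd : IsSemiDissipative L)
    (m : ℕ) (hm1 : 1 ≤ m) (hm : IsHCIndex L m) :
    ∃ u₀ : Fin n → ℂ, (∑ i, ‖u₀ i‖ ^ 2 = (1:ℝ)) ∧
      (∀ j < m, hermPart L *ᵥ ((skewPart L) ^ j *ᵥ u₀) = 0) ∧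
      hermPart L *ᵥ ((skewPart L) ^ m *ᵥ u₀) ≠ 0 := by
  obtain ⟨x, hx0, hTx⟩ : ∃ x ≠ 0, -Tmat L (m - 1) *ᵥ x = 0 := by
    have hnot := hm.2 (m - 1) (by omega)
    rwa [(hsd.neg_Tmat_posSemidef _).posDef_iff_det_ne_zero, not_not,
      ← exists_mulVec_eq_zero_iff] at hnot
  have hker : ∀ j < m, hermPart L *ᵥ (skewPart L ^ j *ᵥ x) = 0 := fun j hj =>
    (hsd.neg_Tmat_mulVec_eq_zero_iff _ x).1 hTx j (by omega)
  have hlast : hermPart L *ᵥ (skewPart L ^ m *ᵥ x) ≠ 0 := by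
    intro h
    have hTmx : -Tmat L m *ᵥ x = 0 := (hsd.neg_Tmat_mulVec_eq_zero_iff m x).2 fun j hj =>
      hj.lt_or_eq.elim (hker j) fun hjm => hjm ▸ h
    exact hx0 (eq_zero_of_mulVec_eq_zero hm.1.det_pos.ne' hTmx)
  obtain ⟨c, hc, hnorm⟩ := exists_smul_sum_norm_sq_eq_one hx0
  refine ⟨c • x, hnorm, fun j hj => ?_, ?_⟩
  · rw [mulVec_smul, mulVec_smul, hker j hj, smul_zero]
  · rwa [mulVec_smul, mulVec_smul, smul_ne_zero_iff_right hc]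
end
end

section
/- Let L ∈ ℂ^{n×n} with negative semidefinite Hermitian part L_H, let m ∈ ℕ, and let u₀ ∈ ℂ^n satisfy L_H (L_S)^j u₀ = 0 for all 0 ≤ j ≤ m−1. Then ⟨u₀, (L^{2m} + (L*)^{2m}) u₀⟩ = 2·(−1)^m · ‖L_S^m u₀‖². -/
/-!
Writing `L = L_H + L_S` and `L* = L_H - L_S`, the hypothesis `L_H L_S^j u₀ = 0` for `j < m` lets
every factor `L_H` drop out of `L^k u₀` and `(L*)^k u₀` for `k ≤ m`, so `L^m u₀ = L_S^m u₀` and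
`(L*)^m u₀ = (-1)^m L_S^m u₀`. Splitting `L^{2m} = L^m L^m` and moving one factor `L^m` to the
left side of the inner product as `(L*)^m` gives both terms as `(-1)^m ‖L_S^m u₀‖²`.
-/

open Matrix Polynomial
open scoped Matrix.Norms.L2Operator ComplexOrder

noncomputable section

namespace Matrix

variable {ι R : Type*} [Fintype ι]

theorem star_dotProduct_self_eq_sum_norm_sq (v : ι → ℂ) :
    star v ⬝ᵥ v = ((∑ i, ‖v i‖ ^ 2 : ℝ) : ℂ) := by
  push_cast
  exact Finset.sum_congr rfl fun i _ => Complex.conj_mul' (v i)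

variable [DecidableEq ι]

theorem add_pow_mulVec_of_mulVec_pow_eq_zero [Semiring R] (H S : Matrix ι ι R) (u : ι → R)
    {k : ℕ} (h : ∀ j < k, H *ᵥ (S ^ j *ᵥ u) = 0) : (H + S) ^ k *ᵥ u = S ^ k *ᵥ u := by
  induction k with
  | zero => rfl
  | succ k ih =>
    rw [pow_succ', ← mulVec_mulVec, ih fun j hj => h j (by omega), add_mulVec, h k k.lt_succ_self,
      zero_add, mulVec_mulVec, ← pow_succ']

theorem sub_pow_mulVec_of_mulVec_pow_eq_zero [CommRing R] (H S : Matrix ι ι R) (u : ι → R)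
    {k : ℕ} (h : ∀ j < k, H *ᵥ (S ^ j *ᵥ u) = 0) :
    (H - S) ^ k *ᵥ u = (-1 : R) ^ k • (S ^ k *ᵥ u) := by
  induction k with
  | zero => simp
  | succ k ih =>
    rw [pow_succ', ← mulVec_mulVec, ih fun j hj => h j (by omega), mulVec_smul, sub_mulVec,
      h k k.lt_succ_self, zero_sub, mulVec_mulVec, ← pow_succ', smul_neg, ← neg_smul,
      pow_succ (-1 : R), mul_neg_one]

theorem star_dotProduct_pow_two_mul_mulVec [Semiring R] [StarRing R] (A : Matrix ι ι R)
    (u : ι → R) (m : ℕ) :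
    star u ⬝ᵥ (A ^ (2 * m) *ᵥ u) = star (Aᴴ ^ m *ᵥ u) ⬝ᵥ (A ^ m *ᵥ u) := by
  rw [two_mul, pow_add, ← mulVec_mulVec, dotProduct_mulVec, star_mulVec, conjTranspose_pow,
    conjTranspose_conjTranspose]

end Matrix

theorem hermPart_sub_skewPart {n : ℕ} (L : Matrix (Fin n) (Fin n) ℂ) :
    hermPart L - skewPart L = Lᴴ := by
  simp only [hermPart, skewPart]
  module

theorem stmt16_general {n : ℕ} (L : Matrix (Fin n) (Fin n) ℂ)
    (m : ℕ) (u₀ : Fin n → ℂ)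
    (h : ∀ j < m, hermPart L *ᵥ ((skewPart L) ^ j *ᵥ u₀) = 0) :
    star u₀ ⬝ᵥ ((L ^ (2 * m) + (Lᴴ) ^ (2 * m)) *ᵥ u₀) =
      2 * (-1 : ℂ) ^ m * ((∑ i, ‖((skewPart L) ^ m *ᵥ u₀) i‖ ^ 2 : ℝ) : ℂ) := by
  have hL : L ^ m *ᵥ u₀ = skewPart L ^ m *ᵥ u₀ := by
    simpa only [hermPart_add_skewPart] using add_pow_mulVec_of_mulVec_pow_eq_zero _ _ _ h
  have hLH : Lᴴ ^ m *ᵥ u₀ = (-1 : ℂ) ^ m • (skewPart L ^ m *ᵥ u₀) := by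
    simpa only [hermPart_sub_skewPart] using sub_pow_mulVec_of_mulVec_pow_eq_zero _ _ _ h
  rw [add_mulVec, dotProduct_add, star_dotProduct_pow_two_mul_mulVec,
    star_dotProduct_pow_two_mul_mulVec, conjTranspose_conjTranspose, hL, hLH, star_smul,
    smul_dotProduct, dotProduct_smul, ← star_dotProduct_self_eq_sum_norm_sq]
  simp only [star_pow, star_neg, star_one, smul_eq_mul]
  ring

/-- even-power identity
`⟨u₀, (L^{2m} + (L*)^{2m}) u₀⟩ = 2 (-1)^m ‖L_S^m u₀‖²`. -/
theorem stmt16 {n : ℕ} (L : Matrix (Fin n) (Fin n) ℂ) (hL : (-(hermPart L)).PosSemidef)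
    (m : ℕ) (hm : 1 ≤ m) (u₀ : Fin n → ℂ)
    (h : ∀ j < m, hermPart L *ᵥ ((skewPart L) ^ j *ᵥ u₀) = 0) :
    star u₀ ⬝ᵥ ((L ^ (2 * m) + (Lᴴ) ^ (2 * m)) *ᵥ u₀) =
      2 * (-1 : ℂ) ^ m * ((∑ i, ‖((skewPart L) ^ m *ᵥ u₀) i‖ ^ 2 : ℝ) : ℂ) :=
  stmt16_general L m u₀ h
end
end

section
/- Let R be a stability function of order p ∈ ℕ with s stages and coefficients c_j, and let L ∈ ℂ^{n×n}. Define G(τ) := R(τL)* R(τL) and Q(τ) := e^{τL*} e^{τL}. Then there exists a constant C > 0 such that ‖ G(τ) − Q(τ) − (c_{p+1} − 1)·(τ^{p+1}/(p+1)!)·(L^{p+1} + (L*)^{p+1}) ‖₂ ≤ C·τ^{p+2} for all τ ∈ [0, 1]. -/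
open Matrix Polynomial
open scoped Matrix.Norms.L2Operator ComplexOrder

noncomputable section

/-! With `A = R(τL)`, `E = e^{τL}` and `D = A - E` there is the exact identity
`A* A - E* E = D + D* + D* (A - 1) + (E* - 1) D`.
Because `R` matches the exponential series up to order `p`, `D` equals
`(c_{p+1} - 1) τ^{p+1} L^{p+1} / (p+1)!` up to `O(τ^{p+2})`, while `A - 1` and `E - 1` are `O(τ)`.
So the two quadratic terms are `O(τ^{p+2})` and the linear terms `D + D*` produce the leading term.
All bounds are uniform in `τ ∈ [0, 1]`, i.e. big-O along the principal filter of `Icc 0 1`. -/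
open Asymptotics Filter Finset Set

section NormedAlgebra

variable {𝔸 : Type*} [NormedRing 𝔸] [NormedAlgebra ℂ 𝔸]

theorem isBigO_pow_pow_of_le {m k : ℕ} (h : m ≤ k) :
    (fun τ : ℝ => τ ^ k) =O[𝓟 (Icc 0 1)] (fun τ => τ ^ m) :=
  IsBigO.of_bound' <| eventually_principal.2 fun _τ ⟨h0, h1⟩ => by
    simpa [abs_of_nonneg h0] using pow_le_pow_of_le_one h0 h1 h

theorem isBigO_ofReal_smul_pow (l : Filter ℝ) (a : 𝔸) (j : ℕ) :
    (fun τ : ℝ => ((τ : ℂ) • a) ^ j) =O[l] (fun τ => τ ^ j) :=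
  isBigO_of_le' (c := ‖a ^ j‖) l fun τ => by
    rw [_root_.smul_pow, norm_smul, ← Complex.ofReal_pow, Complex.norm_real, mul_comm]

theorem isBigO_sum_Ico_smul_ofReal_smul_pow (a : 𝔸) (γ : ℕ → ℂ) (m N : ℕ) :
    (fun τ : ℝ => ∑ j ∈ Ico m N, γ j • ((τ : ℂ) • a) ^ j) =O[𝓟 (Icc 0 1)] (fun τ => τ ^ m) :=
  IsBigO.fun_sum fun j hj =>
    ((isBigO_ofReal_smul_pow _ a j).const_smul_left (γ j)).trans
      (isBigO_pow_pow_of_le (mem_Ico.1 hj).1)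

theorem isBigO_sum_Ico_smul_ofReal_smul_pow_sub_leading (a : 𝔸) (γ : ℕ → ℂ) {m N : ℕ}
    (h : m < N) :
    (fun τ : ℝ => ∑ j ∈ Ico m N, γ j • ((τ : ℂ) • a) ^ j - γ m • ((τ : ℂ) • a) ^ m)
      =O[𝓟 (Icc 0 1)] (fun τ => τ ^ (m + 1)) := by
  simpa only [sum_eq_sum_Ico_succ_bot h, add_sub_cancel_left]
    using isBigO_sum_Ico_smul_ofReal_smul_pow a γ (m + 1) N

theorem norm_exp_sub_sum_range_le [CompleteSpace 𝔸] (a : 𝔸) {k : ℕ} (hk : 0 < k) :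
    ‖NormedSpace.exp a - ∑ j ∈ range k, (j.factorial : ℂ)⁻¹ • a ^ j‖ ≤ ‖a‖ ^ k * Real.exp ‖a‖ := by
  have hsum : Summable fun j : ℕ => (j.factorial : ℂ)⁻¹ • a ^ j :=
    NormedSpace.expSeries_summable' a
  have htail : NormedSpace.exp a - ∑ j ∈ range k, (j.factorial : ℂ)⁻¹ • a ^ j
      = ∑' j : ℕ, ((j + k).factorial : ℂ)⁻¹ • a ^ (j + k) := by
    rw [congrFun (NormedSpace.exp_eq_tsum ℂ) a, ← hsum.sum_add_tsum_nat_add k, add_sub_cancel_left]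
  have hterm (j : ℕ) :
      ‖((j + k).factorial : ℂ)⁻¹ • a ^ (j + k)‖ ≤ ‖a‖ ^ k * (‖a‖ ^ j / j.factorial) := by
    have hfact : ((j + k).factorial : ℝ)⁻¹ ≤ (j.factorial : ℝ)⁻¹ :=
      inv_anti₀ (by positivity) (by exact_mod_cast Nat.factorial_le (Nat.le_add_right j k))
    calc ‖((j + k).factorial : ℂ)⁻¹ • a ^ (j + k)‖
        = ((j + k).factorial : ℝ)⁻¹ * ‖a ^ (j + k)‖ := by
          rw [norm_smul, norm_inv, Complex.norm_natCast]
      _ ≤ (j.factorial : ℝ)⁻¹ * ‖a‖ ^ (j + k) := by gcongr; exact norm_pow_le' a (by omega)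
      _ = ‖a‖ ^ k * (‖a‖ ^ j / j.factorial) := by ring
  rw [htail, Real.exp_eq_exp_ℝ, NormedSpace.exp_eq_tsum_div, ← tsum_mul_left]
  exact tsum_of_norm_bounded ((Real.summable_pow_div_factorial ‖a‖).mul_left _).hasSum hterm

theorem isBigO_exp_ofReal_smul_sub_sum_range [CompleteSpace 𝔸] (a : 𝔸) {k : ℕ} (hk : 0 < k) :
    (fun τ : ℝ => NormedSpace.exp ((τ : ℂ) • a)
        - ∑ j ∈ range k, (j.factorial : ℂ)⁻¹ • ((τ : ℂ) • a) ^ j)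
      =O[𝓟 (Icc 0 1)] (fun τ => τ ^ k) := by
  refine IsBigO.of_bound (‖a‖ ^ k * Real.exp ‖a‖) <| eventually_principal.2 fun τ ⟨h0, h1⟩ => ?_
  have hnorm : ‖(τ : ℂ) • a‖ = τ * ‖a‖ := by
    rw [norm_smul, Complex.norm_real, Real.norm_of_nonneg h0]
  calc _ ≤ (τ * ‖a‖) ^ k * Real.exp (τ * ‖a‖) := hnorm ▸ norm_exp_sub_sum_range_le _ hk
    _ ≤ (τ * ‖a‖) ^ k * Real.exp ‖a‖ := by
        gcongr; exact mul_le_of_le_one_left (norm_nonneg a) h1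
    _ = ‖a‖ ^ k * Real.exp ‖a‖ * ‖τ ^ k‖ := by
        rw [norm_pow, Real.norm_of_nonneg h0]; ring

end NormedAlgebra

theorem star_mul_self_sub_star_mul_self {R : Type*} [Ring R] [StarRing R] (a e : R) :
    star a * a - star e * e = (a - e) + star (a - e) + star (a - e) * (a - 1)
      + star (e - 1) * (a - e) := by
  simp only [star_sub, star_one]
  noncomm_ring

theorem isBigO_star_mul_self_sub_star_mul_self {𝔸 : Type*} [NormedRing 𝔸] [StarRing 𝔸]
    [NormedStarGroup 𝔸] {l : Filter ℝ} {a e b : ℝ → 𝔸} {k : ℕ}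
    (hab : (fun τ => a τ - e τ - b τ) =O[l] (fun τ => τ ^ (k + 1)))
    (hae : (fun τ => a τ - e τ) =O[l] (fun τ => τ ^ k))
    (ha : (fun τ => a τ - 1) =O[l] (fun τ => τ)) (he : (fun τ => e τ - 1) =O[l] (fun τ => τ)) :
    (fun τ => star (a τ) * a τ - star (e τ) * e τ - (b τ + star (b τ)))
      =O[l] (fun τ => τ ^ (k + 1)) := by
  have hstar {f : ℝ → 𝔸} {g : ℝ → ℝ} (h : f =O[l] g) : (fun τ => star (f τ)) =O[l] g :=
    (isBigO_of_le l fun τ => (norm_star (f τ)).le).trans h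
  have hmul₁ : (fun τ => star (a τ - e τ) * (a τ - 1)) =O[l] (fun τ => τ ^ (k + 1)) :=
    ((hstar hae).mul ha).congr_right fun τ => (pow_succ τ k).symm
  have hmul₂ : (fun τ => star (e τ - 1) * (a τ - e τ)) =O[l] (fun τ => τ ^ (k + 1)) :=
    ((hstar he).mul hae).congr_right fun τ => (pow_succ' τ k).symm
  refine (((hab.add (hstar hab)).add hmul₁).add hmul₂).congr_left fun τ => ?_
  rw [star_mul_self_sub_star_mul_self, star_sub, star_sub]
  abel

namespace IsStabilityFunction

variable {c : ℕ → ℝ} {p s : ℕ}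

theorem stabFunMat_sub_exp (h : IsStabilityFunction c p s) {n N : ℕ} (hN : s < N)
    (M : Matrix (Fin n) (Fin n) ℂ) :
    stabFunMat c s M - NormedSpace.exp M
      = ∑ j ∈ Ico (p + 1) N, (((c j : ℂ) - 1) / j.factorial) • M ^ j
        - (NormedSpace.exp M - ∑ j ∈ range N, (j.factorial : ℂ)⁻¹ • M ^ j) := by
  have hR : stabFunMat c s M = ∑ j ∈ range N, ((c j : ℂ) / j.factorial) • M ^ j :=
    sum_subset (range_subset_range.2 hN) fun j _ hj => by
      simp [h.high j (by simpa using hj)]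
  have hlow : ∑ j ∈ range (p + 1), (((c j : ℂ) - 1) / j.factorial) • M ^ j = 0 :=
    sum_eq_zero fun j hj => by simp [h.low j (Nat.lt_succ_iff.1 (mem_range.1 hj))]
  have hsplit : stabFunMat c s M - ∑ j ∈ range N, (j.factorial : ℂ)⁻¹ • M ^ j
      = ∑ j ∈ range N, (((c j : ℂ) - 1) / j.factorial) • M ^ j := by
    simp only [hR, ← sum_sub_distrib, ← sub_smul, sub_div, one_div]
  rw [← sum_range_add_sum_Ico (fun j => (((c j : ℂ) - 1) / j.factorial) • M ^ j)
    (h.ple.trans_lt hN), hlow, zero_add] at hsplit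
  rw [← hsplit]
  abel

theorem isBigO_stabFunMat_sub_exp (h : IsStabilityFunction c p s) {n : ℕ}
    (L : Matrix (Fin n) (Fin n) ℂ) :
    (fun τ : ℝ => stabFunMat c s ((τ : ℂ) • L) - NormedSpace.exp ((τ : ℂ) • L))
      =O[𝓟 (Icc 0 1)] (fun τ => τ ^ (p + 1)) := by
  have hps := h.ple
  exact ((isBigO_sum_Ico_smul_ofReal_smul_pow L (fun j => ((c j : ℂ) - 1) / j.factorial)
    (p + 1) (s + 2)).sub ((isBigO_exp_ofReal_smul_sub_sum_range L (k := s + 2) (by omega)).trans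
      (isBigO_pow_pow_of_le (by omega)))).congr_left
    fun τ => (h.stabFunMat_sub_exp (by omega) _).symm

theorem isBigO_stabFunMat_sub_exp_sub_leading (h : IsStabilityFunction c p s) {n : ℕ}
    (L : Matrix (Fin n) (Fin n) ℂ) :
    (fun τ : ℝ => stabFunMat c s ((τ : ℂ) • L) - NormedSpace.exp ((τ : ℂ) • L)
        - (((c (p + 1) - 1 : ℝ) : ℂ) * ((τ : ℂ) ^ (p + 1) / ((p + 1).factorial : ℂ))) •
          L ^ (p + 1))
      =O[𝓟 (Icc 0 1)] (fun τ => τ ^ (p + 2)) := by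
  have hps := h.ple
  refine ((isBigO_sum_Ico_smul_ofReal_smul_pow_sub_leading L
    (fun j => ((c j : ℂ) - 1) / j.factorial) (N := s + 2) (by omega)).sub
    ((isBigO_exp_ofReal_smul_sub_sum_range L (k := s + 2) (by omega)).trans
      (isBigO_pow_pow_of_le (by omega)))).congr_left fun τ => ?_
  rw [h.stabFunMat_sub_exp (by omega : s < s + 2), _root_.smul_pow, smul_smul]
  have hcoeff : ((c (p + 1) : ℂ) - 1) / ((p + 1).factorial : ℂ) * (τ : ℂ) ^ (p + 1)
      = ((c (p + 1) - 1 : ℝ) : ℂ) * ((τ : ℂ) ^ (p + 1) / ((p + 1).factorial : ℂ)) := by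
    push_cast; ring
  rw [hcoeff]
  abel

end IsStabilityFunction

/-- expansion of `G(τ) - Q(τ)`, where `G(τ) = R(τL)* R(τL)` and
`Q(τ) = e^{τL*} e^{τL}`:
`G(τ) - Q(τ) = (c_{p+1} - 1) τ^{p+1}/(p+1)! (L^{p+1} + (L*)^{p+1}) + O(τ^{p+2})`. -/
theorem stmt19 (c : ℕ → ℝ) (p s : ℕ) (h : IsStabilityFunction c p s)
    {n : ℕ} (L : Matrix (Fin n) (Fin n) ℂ) :
    ∃ C > (0:ℝ), ∀ τ : ℝ, 0 ≤ τ → τ ≤ 1 →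
      ‖(stabFunMat c s ((τ:ℂ) • L))ᴴ * stabFunMat c s ((τ:ℂ) • L) -
          NormedSpace.exp ((τ:ℂ) • Lᴴ) * NormedSpace.exp ((τ:ℂ) • L) -
          (((c (p + 1) - 1 : ℝ) : ℂ) * ((τ:ℂ) ^ (p + 1) / ((p + 1).factorial : ℂ))) •
            (L ^ (p + 1) + (Lᴴ) ^ (p + 1))‖ ≤ C * τ ^ (p + 2) := by
  have hD := h.isBigO_stabFunMat_sub_exp L
  have hE1 : (fun τ : ℝ => NormedSpace.exp ((τ : ℂ) • L) - 1) =O[𝓟 (Icc 0 1)] (fun τ => τ) := by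
    simpa using isBigO_exp_ofReal_smul_sub_sum_range L (k := 1) one_pos
  have hR1 : (fun τ : ℝ => stabFunMat c s ((τ : ℂ) • L) - 1) =O[𝓟 (Icc 0 1)] (fun τ => τ) :=
    ((hD.trans (by simpa using isBigO_pow_pow_of_le (Nat.le_add_left 1 p))).add hE1).congr_left
      fun τ => sub_add_sub_cancel _ _ _
  obtain ⟨C, hC, hbound⟩ :=
    (isBigO_star_mul_self_sub_star_mul_self (h.isBigO_stabFunMat_sub_exp_sub_leading L)
      hD hR1 hE1).exists_pos
  refine ⟨C, hC, fun τ h0 h1 => ?_⟩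
  have hexp : NormedSpace.exp ((τ : ℂ) • Lᴴ) = star (NormedSpace.exp ((τ : ℂ) • L)) := by
    rw [NormedSpace.star_exp, star_smul, Complex.star_def, Complex.conj_ofReal,
      star_eq_conjTranspose]
  have key := eventually_principal.1 hbound.bound τ ⟨h0, h1⟩
  rw [Real.norm_of_nonneg (by positivity)] at key
  convert key using 3
  · rw [hexp]; rfl
  · rw [smul_add, star_smul, star_pow, star_eq_conjTranspose]
    congr
    simp
end
end
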